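/- In the reduction graph G(φ), if I is a satisfying truth assignment of φ, then the set S = T(I) ∪ F(I) ∪ {c_j : C_j is traversable with respect to I} is a minimal a-b separator of G(φ) of size at least 4, and moreover it is an inclusion-wise minimal separator. -/

import Mathlib

open SimpleGraph

variable {V : Type*}

/-- `S` is an `a`-`b` separator: `a, b ∉ S` and they are in different components of `G - S`. -/
def IsABSep (G : SimpleGraph V) (S : Set V) (a b : V) : Prop :=
  ∃ (ha : a ∈ Sᶜ) (hb : b ∈ Sᶜ), ¬ (G.induce Sᶜ).Reachable ⟨a, ha⟩ ⟨b, hb⟩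

/-- `S` is a separator of `G`. -/
def IsSep (G : SimpleGraph V) (S : Set V) : Prop :=
  ∃ a b, IsABSep G S a b

/-- `S` is a minimal `a`-`b` separator: no proper subset is an `a`-`b` separator. -/
def IsMinABSep (G : SimpleGraph V) (S : Set V) (a b : V) : Prop :=
  IsABSep G S a b ∧ ∀ T ⊂ S, ¬ IsABSep G T a b

/-- `S` is an inclusion-wise minimal separator: no proper subset is a separator. -/
def IsInclMinSep (G : SimpleGraph V) (S : Set V) : Prop :=
  IsSep G S ∧ ∀ T ⊂ S, ¬ IsSep G T

/-- A literal is a variable together with a polarity (true = positive). -/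
abbrev Lit := ℕ × Bool

/-- A 3-clause. -/
abbrev Clause3 := Lit × Lit × Lit

/-- A 3-CNF formula. -/
abbrev CNF3 := List Clause3

/-- A literal holds under an assignment. -/
def LitHolds (I : ℕ → Prop) (l : Lit) : Prop :=
  if l.2 then I l.1 else ¬ I l.1

/-- A clause holds under an assignment. -/
def ClauseHolds (I : ℕ → Prop) (C : Clause3) : Prop :=
  LitHolds I C.1 ∨ LitHolds I C.2.1 ∨ LitHolds I C.2.2

/-- The i-th literal of a clause. -/
def clauseLit (C : Clause3) (i : Fin 3) : Lit :=
  if i.val = 0 then C.1 else if i.val = 1 then C.2.1 else C.2.2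

/-- The i-th literal ℓ_i^j of the j-th clause of φ. -/
def lit (φ : CNF3) (j : Fin φ.length) (i : Fin 3) : Lit :=
  clauseLit (φ.get j) i

/-- The variable of the literal ℓ_i^j. -/
def lvar (φ : CNF3) (j : Fin φ.length) (i : Fin 3) : ℕ := (lit φ j i).1

/-- The polarity of the literal ℓ_i^j (true = positive). -/
def lpos (φ : CNF3) (j : Fin φ.length) (i : Fin 3) : Bool := (lit φ j i).2

/-- Index set for the conflict vertices: pairs (u_i^j, w_{i'}^{j'}) of vertices whose
literals share the same variable, with j ≠ j'. -/
def Conflict (φ : CNF3) :=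
  {p : (Fin φ.length × Fin 3) × (Fin φ.length × Fin 3) //
    lvar φ p.1.1 p.1.2 = lvar φ p.2.1 p.2.2 ∧ p.1.1 ≠ p.2.1}

/-- Index set for the pendant vertices: one for each of a, b, one for each conflict vertex,
and one for each middle vertex v_i^j. -/
def PendIdx (φ : CNF3) := Fin 2 ⊕ Conflict φ ⊕ (Fin φ.length × Fin 3)

/-- The vertex set of the reduction graph G(φ): path vertices (j, i, k) with k = 0, 1, 2
standing for u_i^j, v_i^j, w_i^j; clause vertices c_j; conflict vertices; pendant vertices;
and the two terminals a, b. -/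
def Vtx (φ : CNF3) :=
  (Fin φ.length × Fin 3 × Fin 3) ⊕ Fin φ.length ⊕ Conflict φ ⊕ PendIdx φ ⊕ Fin 2

/-- The path vertex: `pathV φ j i 0 = u_i^j`, `pathV φ j i 1 = v_i^j`, `pathV φ j i 2 = w_i^j`. -/
def pathV (φ : CNF3) (j : Fin φ.length) (i : Fin 3) (k : Fin 3) : Vtx φ :=
  Sum.inl (j, i, k)

/-- The clause vertex c_j. -/
def cV (φ : CNF3) (j : Fin φ.length) : Vtx φ := Sum.inr (Sum.inl j)

/-- A conflict vertex y. -/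
def yV (φ : CNF3) (q : Conflict φ) : Vtx φ := Sum.inr (Sum.inr (Sum.inl q))

/-- A pendant vertex z. -/
def zV (φ : CNF3) (q : PendIdx φ) : Vtx φ := Sum.inr (Sum.inr (Sum.inr (Sum.inl q)))

/-- The terminal a. -/
def aV (φ : CNF3) : Vtx φ := Sum.inr (Sum.inr (Sum.inr (Sum.inr 0)))

/-- The terminal b. -/
def bV (φ : CNF3) : Vtx φ := Sum.inr (Sum.inr (Sum.inr (Sum.inr 1)))

/-- The vertex to which a pendant vertex is attached. -/
def pendTarget (φ : CNF3) : PendIdx φ → Vtx φ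
  | Sum.inl t => if t = 0 then aV φ else bV φ
  | Sum.inr (Sum.inl q) => yV φ q
  | Sum.inr (Sum.inr (j, i)) => pathV φ j i 1

/-- The edges of the reduction graph G(φ) (as a relation, to be symmetrized):
the paths u_i^j—v_i^j—w_i^j, the edges from a to the u's and from b to the w's, the edges
from c_j to u_i^j (negative literal) or w_i^j (positive literal), the edges from each
conflict vertex to its conflicting pair, and the pendant edges. -/
def redRel (φ : CNF3) : Vtx φ → Vtx φ → Prop := fun x y =>
  (∃ j i, (x = pathV φ j i 0 ∧ y = pathV φ j i 1) ∨ (x = pathV φ j i 1 ∧ y = pathV φ j i 2)) ∨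
  (∃ j i, x = aV φ ∧ y = pathV φ j i 0) ∨
  (∃ j i, x = bV φ ∧ y = pathV φ j i 2) ∨
  (∃ j i, x = cV φ j ∧
    ((lpos φ j i = false ∧ y = pathV φ j i 0) ∨ (lpos φ j i = true ∧ y = pathV φ j i 2))) ∨
  (∃ q : Conflict φ, x = yV φ q ∧
    (y = pathV φ q.1.1.1 q.1.1.2 0 ∨ y = pathV φ q.1.2.1 q.1.2.2 2)) ∨
  (∃ q : PendIdx φ, x = zV φ q ∧ y = pendTarget φ q)

/-- The reduction graph G(φ). -/
def Gred (φ : CNF3) : SimpleGraph (Vtx φ) := SimpleGraph.fromRel (redRel φ)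

/-- T(I): the vertices u_i^j whose variable is assigned 1 by I. -/
def TSet (φ : CNF3) (I : ℕ → Prop) : Set (Vtx φ) :=
  {x | ∃ j i, x = pathV φ j i 0 ∧ I (lvar φ j i)}

/-- F(I): the vertices w_i^j whose variable is assigned 0 by I. -/
def FSet (φ : CNF3) (I : ℕ → Prop) : Set (Vtx φ) :=
  {x | ∃ j i, x = pathV φ j i 2 ∧ ¬ I (lvar φ j i)}

/-- A clause is traversable w.r.t. I if it has a negative literal whose variable is assigned
0 and a positive literal whose variable is assigned 1. -/
def TraversableClause (φ : CNF3) (I : ℕ → Prop) (j : Fin φ.length) : Prop :=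
  (∃ i, lpos φ j i = false ∧ ¬ I (lvar φ j i)) ∧ (∃ i, lpos φ j i = true ∧ I (lvar φ j i))


/-!
Put `S = assignmentSep φ I`. In `G(φ) - S` the predicate `bSide` is constant along edges: the
`u`'s lie on the side of `a`, the `w`'s on the side of `b`, and `v_i^j`, the conflict vertices
and the pendants follow the truth value of their variable. A clause vertex `c_j ∉ S` is not
traversable, so all its neighbours outside `S` lie on one side. Hence `S` separates `a` from `b`.

If `T ⊊ S`, every vertex outside `T` still reaches `a` or `b` (a clause vertex through a satisfied
literal), and a vertex `s ∈ S \ T` lies on a path `a u v w b` or `a u c_j w b` avoiding `T`,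
so `G(φ) - T` is connected. Each literal occurrence puts exactly one of `u_i^j`, `w_i^j` into
`S`, so `|S| ≥ 3m`.
-/

namespace SimpleGraph

def ReachableAvoiding (G : SimpleGraph V) (T : Set V) (x y : V) : Prop :=
  ∃ (hx : x ∈ Tᶜ) (hy : y ∈ Tᶜ), (G.induce Tᶜ).Reachable ⟨x, hx⟩ ⟨y, hy⟩

variable {G : SimpleGraph V} {S T : Set V} {a b x y z : V}

theorem ReachableAvoiding.refl (hx : x ∉ T) : G.ReachableAvoiding T x x :=
  ⟨hx, hx, Reachable.rfl⟩

theorem ReachableAvoiding.symm : G.ReachableAvoiding T x y → G.ReachableAvoiding T y x :=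
  fun ⟨hx, hy, h⟩ => ⟨hy, hx, h.symm⟩

theorem ReachableAvoiding.trans :
    G.ReachableAvoiding T x y → G.ReachableAvoiding T y z → G.ReachableAvoiding T x z :=
  fun ⟨hx, _, h⟩ ⟨_, hz, h'⟩ => ⟨hx, hz, h.trans h'⟩

theorem Adj.reachableAvoiding (h : G.Adj x y) (hx : x ∉ T) (hy : y ∉ T) :
    G.ReachableAvoiding T x y :=
  ⟨hx, hy, Adj.reachable (G := G.induce Tᶜ) h⟩

theorem isABSep_of_adj_iff (f : V → Prop) (hf : ∀ x y, G.Adj x y → x ∉ S → y ∉ S → (f x ↔ f y))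
    (ha : a ∉ S) (hb : b ∉ S) (hfa : ¬ f a) (hfb : f b) : IsABSep G S a b := by
  refine ⟨ha, hb, fun ⟨p⟩ => hfa ?_⟩
  suffices ∀ {x y : ↥Sᶜ}, (G.induce Sᶜ).Walk x y → (f x ↔ f y) from (this p).2 hfb
  intro x y p
  induction p with
  | nil => rfl
  | @cons u v _ h _ ih => exact (hf _ _ h u.2 v.2).trans ih

theorem not_isSep_of_reachableAvoiding (hab : G.ReachableAvoiding T a b)
    (h : ∀ x ∉ T, G.ReachableAvoiding T x a ∨ G.ReachableAvoiding T x b) : ¬ IsSep G T := by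
  have to_a : ∀ x ∉ T, G.ReachableAvoiding T x a := fun x hx =>
    (h x hx).elim id (·.trans hab.symm)
  rintro ⟨x, y, hx, hy, hxy⟩
  obtain ⟨_, _, hr⟩ := (to_a x hx).trans (to_a y hy).symm
  exact hxy hr

end SimpleGraph

variable {φ : CNF3} {I : ℕ → Prop} {j : Fin φ.length} {i : Fin 3}

def assignmentSep (φ : CNF3) (I : ℕ → Prop) : Set (Vtx φ) :=
  TSet φ I ∪ FSet φ I ∪ {x | ∃ j, x = cV φ j ∧ TraversableClause φ I j}

-- `Vtx` is unfolded so that `simp` sees the `Sum` constructors and can use their injectivity.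
@[simp] theorem pathV_zero_mem_assignmentSep :
    pathV φ j i 0 ∈ assignmentSep φ I ↔ I (lvar φ j i) := by
  unfold assignmentSep TSet FSet pathV cV Vtx; simp

@[simp] theorem pathV_one_notMem_assignmentSep : pathV φ j i 1 ∉ assignmentSep φ I := by
  unfold assignmentSep TSet FSet pathV cV Vtx; simp

@[simp] theorem pathV_two_mem_assignmentSep :
    pathV φ j i 2 ∈ assignmentSep φ I ↔ ¬ I (lvar φ j i) := by
  unfold assignmentSep TSet FSet pathV cV Vtx; simp

@[simp] theorem cV_mem_assignmentSep : cV φ j ∈ assignmentSep φ I ↔ TraversableClause φ I j := by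
  unfold assignmentSep TSet FSet pathV cV Vtx; simp

@[simp] theorem yV_notMem_assignmentSep {q : Conflict φ} : yV φ q ∉ assignmentSep φ I := by
  unfold assignmentSep TSet FSet pathV cV yV Vtx; simp

@[simp] theorem aV_notMem_assignmentSep : aV φ ∉ assignmentSep φ I := by
  unfold assignmentSep TSet FSet pathV cV aV Vtx; simp

@[simp] theorem bV_notMem_assignmentSep : bV φ ∉ assignmentSep φ I := by
  unfold assignmentSep TSet FSet pathV cV bV Vtx; simp

theorem gred_adj_of_redRel {x y : Vtx φ} (hne : x ≠ y) (h : redRel φ x y) : (Gred φ).Adj x y :=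
  fromRel_adj _ _ _ |>.mpr ⟨hne, .inl h⟩

theorem gred_adj_aV_pathV : (Gred φ).Adj (aV φ) (pathV φ j i 0) :=
  gred_adj_of_redRel nofun (.inr (.inl ⟨j, i, rfl, rfl⟩))

theorem gred_adj_pathV_zero_one : (Gred φ).Adj (pathV φ j i 0) (pathV φ j i 1) :=
  gred_adj_of_redRel (by simp [pathV, Vtx]) (.inl ⟨j, i, .inl ⟨rfl, rfl⟩⟩)

theorem gred_adj_pathV_one_two : (Gred φ).Adj (pathV φ j i 1) (pathV φ j i 2) :=
  gred_adj_of_redRel (by simp [pathV, Vtx]) (.inl ⟨j, i, .inr ⟨rfl, rfl⟩⟩)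

theorem gred_adj_pathV_bV : (Gred φ).Adj (pathV φ j i 2) (bV φ) :=
  (gred_adj_of_redRel (x := bV φ) (y := pathV φ j i 2) nofun
    (.inr (.inr (.inl ⟨j, i, rfl, rfl⟩)))).symm

theorem gred_adj_cV_pathV_zero (h : lpos φ j i = false) :
    (Gred φ).Adj (cV φ j) (pathV φ j i 0) :=
  gred_adj_of_redRel nofun (.inr (.inr (.inr (.inl ⟨j, i, rfl, .inl ⟨h, rfl⟩⟩))))

theorem gred_adj_cV_pathV_two (h : lpos φ j i = true) :
    (Gred φ).Adj (cV φ j) (pathV φ j i 2) :=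
  gred_adj_of_redRel nofun (.inr (.inr (.inr (.inl ⟨j, i, rfl, .inr ⟨h, rfl⟩⟩))))

theorem gred_adj_yV_pathV_zero (q : Conflict φ) :
    (Gred φ).Adj (yV φ q) (pathV φ q.1.1.1 q.1.1.2 0) :=
  gred_adj_of_redRel nofun (.inr (.inr (.inr (.inr (.inl ⟨q, rfl, .inl rfl⟩)))))

theorem gred_adj_yV_pathV_two (q : Conflict φ) :
    (Gred φ).Adj (yV φ q) (pathV φ q.1.2.1 q.1.2.2 2) :=
  gred_adj_of_redRel nofun (.inr (.inr (.inr (.inr (.inl ⟨q, rfl, .inr rfl⟩)))))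

theorem gred_adj_zV_pendTarget (p : PendIdx φ) : (Gred φ).Adj (zV φ p) (pendTarget φ p) := by
  refine gred_adj_of_redRel ?_ (.inr (.inr (.inr (.inr (.inr ⟨p, rfl, rfl⟩)))))
  rcases p with t | q | ⟨j, i⟩
  · by_cases ht : t = 0 <;> simp [pendTarget, ht] <;> nofun
  all_goals nofun

theorem exists_satisfied_lit (hI : ∀ C ∈ φ, ClauseHolds I C) (j : Fin φ.length) :
    ∃ i, (lpos φ j i = true ∧ I (lvar φ j i)) ∨ (lpos φ j i = false ∧ ¬ I (lvar φ j i)) := by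
  obtain ⟨i, hi⟩ : ∃ i, LitHolds I (lit φ j i) := by
    rcases hI _ (φ.get_mem j) with h | h | h
    exacts [⟨0, h⟩, ⟨1, h⟩, ⟨2, h⟩]
  refine ⟨i, ?_⟩
  unfold LitHolds at hi
  unfold lpos lvar
  cases h : (lit φ j i).2 <;> simp_all

def bSide (φ : CNF3) (I : ℕ → Prop) : Vtx φ → Prop
  | Sum.inl (j, i, k) => if k = 0 then False else if k = 1 then I (lvar φ j i) else True
  | Sum.inr (Sum.inl j) => ∃ i, lpos φ j i = true ∧ I (lvar φ j i)
  | Sum.inr (Sum.inr (Sum.inl q)) => I (lvar φ q.1.1.1 q.1.1.2)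
  | Sum.inr (Sum.inr (Sum.inr (Sum.inl (Sum.inl t)))) => t = 1
  | Sum.inr (Sum.inr (Sum.inr (Sum.inl (Sum.inr (Sum.inl q))))) => I (lvar φ q.1.1.1 q.1.1.2)
  | Sum.inr (Sum.inr (Sum.inr (Sum.inl (Sum.inr (Sum.inr (j, i)))))) => I (lvar φ j i)
  | Sum.inr (Sum.inr (Sum.inr (Sum.inr t))) => t = 1

theorem bSide_iff_of_redRel {x y : Vtx φ} (h : redRel φ x y)
    (hx : x ∉ assignmentSep φ I) (hy : y ∉ assignmentSep φ I) : bSide φ I x ↔ bSide φ I y := by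
  rcases h with ⟨j, i, ⟨rfl, rfl⟩ | ⟨rfl, rfl⟩⟩ | ⟨j, i, rfl, rfl⟩ | ⟨j, i, rfl, rfl⟩
    | ⟨j, i, rfl, ⟨hl, rfl⟩ | ⟨hl, rfl⟩⟩ | ⟨q, rfl, rfl | rfl⟩ | ⟨q, rfl, rfl⟩
  · rw [pathV_zero_mem_assignmentSep] at hx
    simp [bSide, pathV, hx]
  · rw [pathV_two_mem_assignmentSep, not_not] at hy
    simp [bSide, pathV, hy]
  · simp [bSide, aV, pathV]
  · simp [bSide, bV, pathV]
  · rw [cV_mem_assignmentSep] at hx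
    rw [pathV_zero_mem_assignmentSep] at hy
    simp only [bSide, cV, pathV]
    exact iff_of_false (fun hpos => hx ⟨⟨i, hl, hy⟩, hpos⟩) (by simp)
  · rw [pathV_two_mem_assignmentSep, not_not] at hy
    simpa [bSide, cV, pathV] using ⟨i, hl, hy⟩
  · rw [pathV_zero_mem_assignmentSep] at hy
    simp [bSide, yV, pathV, hy]
  · rw [pathV_two_mem_assignmentSep, not_not] at hy
    simp [bSide, yV, pathV, q.2.1, hy]
  · rcases q with t | q | ⟨j, i⟩
    · fin_cases t <;> rfl
    · rfl
    · rfl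

theorem bSide_iff_of_adj {x y : Vtx φ} (h : (Gred φ).Adj x y)
    (hx : x ∉ assignmentSep φ I) (hy : y ∉ assignmentSep φ I) : bSide φ I x ↔ bSide φ I y := by
  rcases (fromRel_adj _ _ _).mp h with ⟨-, h | h⟩
  exacts [bSide_iff_of_redRel h hx hy, (bSide_iff_of_redRel h hy hx).symm]

theorem isABSep_assignmentSep : IsABSep (Gred φ) (assignmentSep φ I) (aV φ) (bV φ) :=
  isABSep_of_adj_iff (bSide φ I) (fun _ _ => bSide_iff_of_adj) aV_notMem_assignmentSep
    bV_notMem_assignmentSep (by simp [bSide, aV]) (by simp [bSide, bV])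

section ProperSubset

variable {T : Set (Vtx φ)} {x : Vtx φ}

theorem reachableAvoiding_aV_of_adj_pathV_zero (hT : T ⊆ assignmentSep φ I) (hx : x ∉ T)
    (hadj : (Gred φ).Adj x (pathV φ j i 0)) (hI : ¬ I (lvar φ j i)) :
    (Gred φ).ReachableAvoiding T x (aV φ) := by
  have hu : pathV φ j i 0 ∉ T := Set.notMem_subset hT (by simpa using hI)
  exact (hadj.reachableAvoiding hx hu).trans
    (gred_adj_aV_pathV.symm.reachableAvoiding hu (Set.notMem_subset hT aV_notMem_assignmentSep))

theorem reachableAvoiding_bV_of_adj_pathV_two (hT : T ⊆ assignmentSep φ I) (hx : x ∉ T)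
    (hadj : (Gred φ).Adj x (pathV φ j i 2)) (hI : I (lvar φ j i)) :
    (Gred φ).ReachableAvoiding T x (bV φ) := by
  have hw : pathV φ j i 2 ∉ T := Set.notMem_subset hT (by simpa using hI)
  exact (hadj.reachableAvoiding hx hw).trans
    (gred_adj_pathV_bV.reachableAvoiding hw (Set.notMem_subset hT bV_notMem_assignmentSep))

theorem reachableAvoiding_aV_or_bV_of_pathV_one (hT : T ⊆ assignmentSep φ I) :
    (Gred φ).ReachableAvoiding T (pathV φ j i 1) (aV φ) ∨
      (Gred φ).ReachableAvoiding T (pathV φ j i 1) (bV φ) := by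
  have hv : pathV φ j i 1 ∉ T := Set.notMem_subset hT pathV_one_notMem_assignmentSep
  by_cases h : I (lvar φ j i)
  · exact .inr (reachableAvoiding_bV_of_adj_pathV_two hT hv gred_adj_pathV_one_two h)
  · exact .inl (reachableAvoiding_aV_of_adj_pathV_zero hT hv gred_adj_pathV_zero_one.symm h)

theorem reachableAvoiding_aV_or_bV_of_yV (hT : T ⊆ assignmentSep φ I) (q : Conflict φ) :
    (Gred φ).ReachableAvoiding T (yV φ q) (aV φ) ∨
      (Gred φ).ReachableAvoiding T (yV φ q) (bV φ) := by
  have hy : yV φ q ∉ T := Set.notMem_subset hT yV_notMem_assignmentSep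
  by_cases h : I (lvar φ q.1.1.1 q.1.1.2)
  · exact .inr (reachableAvoiding_bV_of_adj_pathV_two hT hy (gred_adj_yV_pathV_two q) (q.2.1 ▸ h))
  · exact .inl (reachableAvoiding_aV_of_adj_pathV_zero hT hy (gred_adj_yV_pathV_zero q) h)

theorem reachableAvoiding_aV_or_bV_of_cV (hI : ∀ C ∈ φ, ClauseHolds I C)
    (hT : T ⊆ assignmentSep φ I) (hc : cV φ j ∉ T) :
    (Gred φ).ReachableAvoiding T (cV φ j) (aV φ) ∨
      (Gred φ).ReachableAvoiding T (cV φ j) (bV φ) := by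
  obtain ⟨i, ⟨hpos, h⟩ | ⟨hneg, h⟩⟩ := exists_satisfied_lit hI j
  · exact .inr (reachableAvoiding_bV_of_adj_pathV_two hT hc (gred_adj_cV_pathV_two hpos) h)
  · exact .inl (reachableAvoiding_aV_of_adj_pathV_zero hT hc (gred_adj_cV_pathV_zero hneg) h)

theorem reachableAvoiding_aV_or_bV (hI : ∀ C ∈ φ, ClauseHolds I C)
    (hT : T ⊆ assignmentSep φ I) (hx : x ∉ T) :
    (Gred φ).ReachableAvoiding T x (aV φ) ∨ (Gred φ).ReachableAvoiding T x (bV φ) := by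
  have ha := Set.notMem_subset hT aV_notMem_assignmentSep
  have hb := Set.notMem_subset hT bV_notMem_assignmentSep
  rcases x with ⟨j, i, k⟩ | j | q | p | t
  · fin_cases k
    · exact .inl (gred_adj_aV_pathV.symm.reachableAvoiding hx ha)
    · exact reachableAvoiding_aV_or_bV_of_pathV_one hT
    · exact .inr (gred_adj_pathV_bV.reachableAvoiding hx hb)
  · exact reachableAvoiding_aV_or_bV_of_cV hI hT hx
  · exact reachableAvoiding_aV_or_bV_of_yV hT q
  · have hz := (gred_adj_zV_pendTarget p).reachableAvoiding hx
    rcases p with t | q | ⟨j, i⟩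
    · fin_cases t
      · exact .inl (hz ha)
      · exact .inr (hz hb)
    · have hy : yV φ q ∉ T := Set.notMem_subset hT yV_notMem_assignmentSep
      exact (reachableAvoiding_aV_or_bV_of_yV hT q).imp (hz hy).trans (hz hy).trans
    · have hv : pathV φ j i 1 ∉ T := Set.notMem_subset hT pathV_one_notMem_assignmentSep
      exact (reachableAvoiding_aV_or_bV_of_pathV_one hT).imp (hz hv).trans (hz hv).trans
  · fin_cases t
    exacts [.inl (.refl ha), .inr (.refl hb)]

theorem reachableAvoiding_aV_bV (hT : T ⊆ assignmentSep φ I) (hs : x ∈ assignmentSep φ I)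
    (hxT : x ∉ T) : (Gred φ).ReachableAvoiding T (aV φ) (bV φ) := by
  have ha := Set.notMem_subset hT aV_notMem_assignmentSep
  have hb := Set.notMem_subset hT bV_notMem_assignmentSep
  rcases hs with (⟨j, i, rfl, h⟩ | ⟨j, i, rfl, h⟩) | ⟨j, rfl, ⟨i, hneg, hi⟩, ⟨i', hpos, hi'⟩⟩
  · have hv : pathV φ j i 1 ∉ T := Set.notMem_subset hT pathV_one_notMem_assignmentSep
    exact (gred_adj_aV_pathV.reachableAvoiding ha hxT).trans
      ((gred_adj_pathV_zero_one.reachableAvoiding hxT hv).trans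
        (reachableAvoiding_bV_of_adj_pathV_two hT hv gred_adj_pathV_one_two h))
  · have hv : pathV φ j i 1 ∉ T := Set.notMem_subset hT pathV_one_notMem_assignmentSep
    exact (reachableAvoiding_aV_of_adj_pathV_zero hT hv gred_adj_pathV_zero_one.symm h).symm.trans
      ((gred_adj_pathV_one_two.reachableAvoiding hv hxT).trans
        (gred_adj_pathV_bV.reachableAvoiding hxT hb))
  · exact
      (reachableAvoiding_aV_of_adj_pathV_zero hT hxT (gred_adj_cV_pathV_zero hneg) hi).symm.trans
        (reachableAvoiding_bV_of_adj_pathV_two hT hxT (gred_adj_cV_pathV_two hpos) hi')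

end ProperSubset

theorem not_isSep_of_ssubset_assignmentSep (hI : ∀ C ∈ φ, ClauseHolds I C)
    {T : Set (Vtx φ)} (hT : T ⊂ assignmentSep φ I) : ¬ IsSep (Gred φ) T := by
  obtain ⟨s, hs, hsT⟩ := Set.exists_of_ssubset hT
  exact not_isSep_of_reachableAvoiding (reachableAvoiding_aV_bV hT.subset hs hsT)
    fun _ => reachableAvoiding_aV_or_bV hI hT.subset

instance : Finite (Vtx φ) := by
  unfold Vtx PendIdx Conflict
  infer_instance

theorem three_mul_length_le_ncard_assignmentSep : 3 * φ.length ≤ (assignmentSep φ I).ncard := by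
  classical
  let f : Fin φ.length × Fin 3 → Vtx φ := fun ⟨j, i⟩ =>
    if I (lvar φ j i) then pathV φ j i 0 else pathV φ j i 2
  have hf : ∀ p ∈ Set.univ, f p ∈ assignmentSep φ I := by
    rintro ⟨j, i⟩ -
    by_cases h : I (lvar φ j i) <;> simp [f, h]
  have hinj : Set.InjOn f Set.univ := by
    rintro ⟨j, i⟩ - ⟨j', i'⟩ - h
    simp only [f] at h
    split_ifs at h <;> simp_all [pathV, Vtx]
  simpa [Set.ncard_univ, mul_comm] using Set.ncard_le_ncard_of_injOn f hf hinj

/-- If I is a satisfying assignment of φ, then T(I) ∪ F(I) ∪ {c_j : C_j traversable} is a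
minimal a-b separator of G(φ) of size at least 4, and moreover an inclusion-wise minimal
separator. -/
theorem satisfying_assignment_gives_inclMinSep (φ : CNF3) (hm : 2 ≤ φ.length)
    (I : ℕ → Prop) (hI : ∀ C ∈ φ, ClauseHolds I C) :
    IsMinABSep (Gred φ)
        (TSet φ I ∪ FSet φ I ∪ {x | ∃ j, x = cV φ j ∧ TraversableClause φ I j}) (aV φ) (bV φ) ∧
    4 ≤ (TSet φ I ∪ FSet φ I ∪ {x | ∃ j, x = cV φ j ∧ TraversableClause φ I j}).ncard ∧
    IsInclMinSep (Gred φ)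
        (TSet φ I ∪ FSet φ I ∪ {x | ∃ j, x = cV φ j ∧ TraversableClause φ I j}) := by
  change IsMinABSep (Gred φ) (assignmentSep φ I) (aV φ) (bV φ) ∧
    4 ≤ (assignmentSep φ I).ncard ∧ IsInclMinSep (Gred φ) (assignmentSep φ I)
  have hsep : IsABSep (Gred φ) (assignmentSep φ I) (aV φ) (bV φ) := isABSep_assignmentSep
  have hmin : ∀ T ⊂ assignmentSep φ I, ¬ IsSep (Gred φ) T :=
    fun _ => not_isSep_of_ssubset_assignmentSep hI
  have hcard : 3 * φ.length ≤ (assignmentSep φ I).ncard := three_mul_length_le_ncard_assignmentSep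
  exact ⟨⟨hsep, fun T hT hTsep => hmin T hT ⟨_, _, hTsep⟩⟩, by omega, ⟨_, _, hsep⟩, hmin⟩
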